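/- For every n ≥ 0, r̃_{Ψ,n} is a polynomial in x with coefficients in B ⊗ ℚ, and the recurrence r̃_{Ψ,n+1} = 2·(2·(d/dx r̃_{Ψ,n})·𝖿(x) + (1 − 2n)·r̃_{Ψ,n}·(d/dx 𝖿(x))) holds. -/

import Mathlib

open Polynomial

noncomputable section

/-- Index set for the variables pᵢ, qᵢ, bᵢ. -/
abbrev VarsB (g m : ℕ) := (Fin (2*g+1) ⊕ Fin (g+1)) ⊕ Fin (m+1)

/-- B = Λ[b₀,…,b_m] = ℤ[p₀,…,p_{2g},q₀,…,q_g,b₀,…,b_m]. -/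
abbrev BRing (g m : ℕ) := MvPolynomial (VarsB g m) ℤ

/-- B ⊗ ℚ. -/
abbrev BQ (g m : ℕ) := MvPolynomial (VarsB g m) ℚ

/-- 𝗉(x) ∈ B[x]. -/
def pB (g m : ℕ) : Polynomial (BRing g m) :=
  X ^ (2*g+1) + ∑ i : Fin (2*g+1), C (MvPolynomial.X (Sum.inl (Sum.inl i))) * X ^ (i : ℕ)

/-- 𝗊(x) ∈ B[x]. -/
def qB (g m : ℕ) : Polynomial (BRing g m) :=
  ∑ i : Fin (g+1), C (MvPolynomial.X (Sum.inl (Sum.inr i))) * X ^ (i : ℕ)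

/-- Ψ(x) = b₀ + b₁x + ⋯ + b_mx^m ∈ B[x]. -/
def PsiB (g m : ℕ) : Polynomial (BRing g m) :=
  ∑ i : Fin (m+1), C (MvPolynomial.X (Sum.inr i)) * X ^ (i : ℕ)

/-- 𝗉(x) ∈ (B⊗ℚ)[x]. -/
def pBQ (g m : ℕ) : Polynomial (BQ g m) :=
  X ^ (2*g+1) + ∑ i : Fin (2*g+1), C (MvPolynomial.X (Sum.inl (Sum.inl i))) * X ^ (i : ℕ)

/-- 𝗊(x) ∈ (B⊗ℚ)[x]. -/
def qBQ (g m : ℕ) : Polynomial (BQ g m) :=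
  ∑ i : Fin (g+1), C (MvPolynomial.X (Sum.inl (Sum.inr i))) * X ^ (i : ℕ)

/-- 𝖿(x) = 𝗉(x) + 𝗊(x)²/4 ∈ (B⊗ℚ)[x]. -/
def fBQ (g m : ℕ) : Polynomial (BQ g m) :=
  pBQ g m + C (MvPolynomial.C ((4:ℚ)⁻¹)) * qBQ g m ^ 2

/-- The evaluation map (B⊗ℚ)[x] → L extending φ : B[x] → L. -/
def psiB (g m : ℕ) (L : Type) [Field L] [CharZero L]
    (φ : Polynomial (BRing g m) →+* L) : Polynomial (BQ g m) →+* L :=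
  Polynomial.eval₂RingHom
    (MvPolynomial.eval₂Hom (Rat.castHom L)
      (fun v => φ (Polynomial.C (MvPolynomial.X v)))) (φ Polynomial.X)

/-- r̃_{Ψ,n} = (2z)^{2n−1}·D₁ⁿ(Ψ(x)z) ∈ L, where z = y + 𝗊(x)/2. -/
def rtB (g m : ℕ) (L : Type) [Field L]
    (φ : Polynomial (BRing g m) →+* L) (y : L) (D : L → L) (n : ℕ) : L :=
  (2 * (y + φ (qB g m) / 2)) ^ (2*(n:ℤ) - 1)
    * D^[n] (φ (PsiB g m) * (y + φ (qB g m) / 2))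

/-- C_{m,n} = ∏_{r=0}^{n−1} (m − 2r). -/
def CcB (m : ℤ) (n : ℕ) : ℤ := ∏ r ∈ Finset.range n, (m - 2*(r : ℤ))

/-
With z = y + 𝗊/2 the curve equation reads z² = 𝖿, so w = 2z satisfies w² = 4𝖿 and
w·D₁w = 2𝖿′. Writing r̃ₙ = w^(2n−1)·D₁ⁿ(Ψz), the Leibniz rule gives
r̃ₙ₊₁ = w²·D₁r̃ₙ + (1 − 2n)·w·D₁w·r̃ₙ, and D₁ acts on (B ⊗ ℚ)[x] as d/dx because it kills B and
sends x to 1; this is the recurrence. As r̃₀ = Ψ/2, induction shows every r̃ₙ is a polynomial.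
-/
def derivationOfLeibniz {K : Type*} [Field K] [CharZero K] (D : K → K)
    (hadd : ∀ a b, D (a + b) = D a + D b) (hmul : ∀ a b, D (a * b) = a * D b + D a * b) :
    Derivation ℚ K K :=
  Derivation.mk' (AddMonoidHom.mk' D hadd).toRatLinearMap fun a b => by
    simp [hmul, smul_eq_mul, mul_comm]

namespace Derivation

theorem map_eval₂_of_map_eq_zero {S R A : Type*} [CommSemiring S] [CommSemiring R]
    [CommSemiring A] [Algebra S A] (D : Derivation S A A) {f : R →+* A}
    (hf : ∀ r, D (f r) = 0) (x : A) (P : R[X]) :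
    D (P.eval₂ f x) = (derivative P).eval₂ f x * D x := by
  induction P using Polynomial.induction_on' with
  | add p q hp hq => simp only [eval₂_add, map_add, hp, hq, add_mul]
  | monomial n a =>
    simp only [eval₂_monomial, derivative_monomial, leibniz, leibniz_pow, hf, smul_eq_mul,
      nsmul_eq_mul, map_mul, _root_.map_natCast f]
    ring

theorem map_mvPolynomial_aeval_eq_zero {R A σ : Type*} [CommSemiring R] [CommSemiring A]
    [Algebra R A] (D : Derivation R A A) {f : σ → A} (hf : ∀ v, D (f v) = 0)
    (c : MvPolynomial σ R) : D (MvPolynomial.aeval f c) = 0 := by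
  have hmem : MvPolynomial.aeval f c ∈ Algebra.adjoin R (Set.range f) := by
    rw [← MvPolynomial.aeval_range]
    exact ⟨c, rfl⟩
  exact D.eqOn_adjoin (D2 := 0) (by rintro _ ⟨v, rfl⟩; exact hf v) hmem

end Derivation

def twistedIterate {K : Type*} [Field K] (D : K → K) (w G : K) (n : ℕ) : K :=
  w ^ (2 * (n : ℤ) - 1) * D^[n] G

theorem twistedIterate_succ {R K : Type*} [CommRing R] [Field K] [Algebra R K]
    (D : Derivation R K K) {w : K} (hw : w ≠ 0) (G : K) (n : ℕ) :
    twistedIterate D w G (n + 1) = w ^ 2 * D (twistedIterate D w G n)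
      + (1 - 2 * n) * w * D w * twistedIterate D w G n := by
  obtain ⟨k, hk⟩ : ∃ k : ℤ, 2 * (n : ℤ) - 1 = k := ⟨_, rfl⟩
  have hk' : 2 * ((n + 1 : ℕ) : ℤ) - 1 = k + 2 := by push_cast; lia
  have hkK : (k : K) = 2 * n - 1 := by rw [← hk]; push_cast; ring
  simp only [twistedIterate, Function.iterate_succ_apply', hk, hk', D.leibniz, D.leibniz_zpow,
    smul_eq_mul, zsmul_eq_mul, zpow_add₀ hw, zpow_sub_one₀ hw, hkK]
  field_simp
  ring

theorem rtB_eq_twistedIterate {g m : ℕ} {L : Type} [Field L] (φ : Polynomial (BRing g m) →+* L)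
    (y : L) (D : L → L) (n : ℕ) :
    rtB g m L φ y D n = twistedIterate D (2 * (y + φ (qB g m) / 2))
      (φ (PsiB g m) * (y + φ (qB g m) / 2)) n :=
  rfl

section Hyperelliptic

variable {g m : ℕ} {L : Type} [Field L] [CharZero L] (φ : Polynomial (BRing g m) →+* L)

theorem psiB_C (c : BQ g m) :
    psiB g m L φ (C c) = MvPolynomial.aeval (fun v => φ (C (MvPolynomial.X v))) c := by
  rw [psiB, coe_eval₂RingHom, eval₂_C, MvPolynomial.aeval_def,
    Subsingleton.elim (algebraMap ℚ L) (Rat.castHom L)]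
  rfl

theorem psiB_X : psiB g m L φ X = φ X := by
  simp [psiB]

theorem psiB_C_X (v : VarsB g m) :
    psiB g m L φ (C (MvPolynomial.X v)) = φ (C (MvPolynomial.X v)) := by
  simp [psiB_C]

theorem psiB_pBQ : psiB g m L φ (pBQ g m) = φ (pB g m) := by
  simp [pBQ, pB, psiB_C_X, psiB_X]

theorem psiB_qBQ : psiB g m L φ (qBQ g m) = φ (qB g m) := by
  simp [qBQ, qB, psiB_C_X, psiB_X]

def PsiBQ (g m : ℕ) : Polynomial (BQ g m) :=
  ∑ i : Fin (m+1), C (MvPolynomial.X (Sum.inr i)) * X ^ (i : ℕ)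

theorem psiB_PsiBQ : psiB g m L φ (PsiBQ g m) = φ (PsiB g m) := by
  simp [PsiBQ, PsiB, psiB_C_X, psiB_X]

theorem psiB_fBQ {y : L} (hy : y ^ 2 + φ (qB g m) * y = φ (pB g m)) :
    psiB g m L φ (fBQ g m) = (y + φ (qB g m) / 2) ^ 2 := by
  have h4 : psiB g m L φ (C (MvPolynomial.C 4⁻¹)) = 4⁻¹ := by simp [psiB_C]
  rw [fBQ, map_add, map_mul, map_pow, psiB_pBQ, psiB_qBQ, h4, ← hy]
  ring

theorem map_psiB_derivative (D : Derivation ℚ L L)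
    (hDc : ∀ v, D (φ (C (MvPolynomial.X v))) = 0) (hDx : D (φ X) = 1) (P : Polynomial (BQ g m)) :
    D (psiB g m L φ P) = psiB g m L φ (derivative P) := by
  have hDcoeff (c : BQ g m) : D (psiB g m L φ (C c)) = 0 := by
    rw [psiB_C]
    exact D.map_mvPolynomial_aeval_eq_zero hDc c
  simpa [psiB, hDx] using
    D.map_eval₂_of_map_eq_zero (fun c => by simpa [psiB] using hDcoeff c) (φ X) P

theorem add_half_qB_ne_zero {y : L}
    (hind : ∀ u v : Polynomial (BRing g m), φ v * y = φ u → v = 0) :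
    y + φ (qB g m) / 2 ≠ 0 := by
  intro h
  have h2 : φ 2 * y = φ (-qB g m) := by
    rw [map_ofNat, map_neg]
    linear_combination 2 * h
  exact two_ne_zero (hind _ _ h2)

def rtStep (g m n : ℕ) (r : Polynomial (BQ g m)) : Polynomial (BQ g m) :=
  2 * (2 * derivative r * fBQ g m
    + ((1 - 2 * (n : ℤ) : ℤ) : Polynomial (BQ g m)) * r * derivative (fBQ g m))

theorem psiB_rtStep (D : Derivation ℚ L L) (hDc : ∀ v, D (φ (C (MvPolynomial.X v))) = 0)
    (hDx : D (φ X) = 1) {y : L} (hy : y ^ 2 + φ (qB g m) * y = φ (pB g m))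
    (n : ℕ) (r : Polynomial (BQ g m)) :
    psiB g m L φ (rtStep g m n r) = (2 * (y + φ (qB g m) / 2)) ^ 2 * D (psiB g m L φ r)
      + (1 - 2 * n) * (2 * (y + φ (qB g m) / 2)) * D (2 * (y + φ (qB g m) / 2))
        * psiB g m L φ r := by
  have hD2 : D 2 = 0 := by exact_mod_cast D.map_natCast 2
  simp only [rtStep, map_mul, map_add, map_ofNat, map_intCast, psiB_fBQ φ hy,
    ← map_psiB_derivative φ D hDc hDx, D.leibniz, D.leibniz_pow, hD2, smul_eq_mul, nsmul_eq_mul]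
  push_cast
  ring

def rtPoly (g m : ℕ) : ℕ → Polynomial (BQ g m)
  | 0 => C (MvPolynomial.C 2⁻¹) * PsiBQ g m
  | n + 1 => rtStep g m n (rtPoly g m n)

theorem psiB_rtPoly_zero {y : L} (D : L → L) (hz : y + φ (qB g m) / 2 ≠ 0) :
    psiB g m L φ (rtPoly g m 0) = rtB g m L φ y D 0 := by
  rw [rtPoly, rtB, map_mul, psiB_C, MvPolynomial.aeval_C, psiB_PsiBQ, map_inv₀, map_ofNat,
    Nat.cast_zero, mul_zero, zero_sub, zpow_neg_one, Function.iterate_zero, id_eq]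
  generalize y + φ (qB g m) / 2 = z at hz ⊢
  field_simp

end Hyperelliptic

theorem stmt15_general (g m : ℕ)
    (L : Type) [Field L] [CharZero L]
    (φ : Polynomial (BRing g m) →+* L) (y : L) (D : L → L)
    (hy : y ^ 2 + φ (qB g m) * y = φ (pB g m))
    (hind : ∀ u v : Polynomial (BRing g m), φ v * y = φ u → v = 0)
    (hDadd : ∀ a b : L, D (a + b) = D a + D b)
    (hDmul : ∀ a b : L, D (a * b) = a * D b + D a * b)
    (hDx : D (φ X) = 1)
    (hDc : ∀ c : BRing g m, D (φ (C c)) = 0) :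
    (∃ r : ℕ → Polynomial (BQ g m),
      ∀ n : ℕ, psiB g m L φ (r n) = rtB g m L φ y D n) ∧
    (∀ (rp : Polynomial (BQ g m)) (n : ℕ), psiB g m L φ rp = rtB g m L φ y D n →
      psiB g m L φ (2 * (2 * (Polynomial.derivative rp) * fBQ g m
          + ((1 - 2*(n:ℤ) : ℤ) : Polynomial (BQ g m)) * rp
            * Polynomial.derivative (fBQ g m)))
        = rtB g m L φ y D (n+1)) := by
  let D₁ := derivationOfLeibniz D hDadd hDmul
  have hz := add_half_qB_ne_zero φ hind
  have step (rp : Polynomial (BQ g m)) (n : ℕ) (h : psiB g m L φ rp = rtB g m L φ y D n) :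
      psiB g m L φ (rtStep g m n rp) = rtB g m L φ y D (n + 1) := by
    rw [psiB_rtStep φ D₁ (fun v => hDc _) hDx hy, h, rtB_eq_twistedIterate φ,
      rtB_eq_twistedIterate φ]
    exact (twistedIterate_succ D₁ (mul_ne_zero two_ne_zero hz) _ n).symm
  refine ⟨⟨rtPoly g m, fun n => ?_⟩, step⟩
  induction n with
  | zero => exact psiB_rtPoly_zero φ D hz
  | succ n ih => exact step _ n ih

/-- each r̃_{Ψ,n} is a polynomial in x with coefficients in B⊗ℚ, and
r̃_{Ψ,n+1} = 2(2(d/dx r̃_{Ψ,n})𝖿(x) + (1−2n)r̃_{Ψ,n}(d/dx 𝖿(x))). The fraction field L of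
B[x][y]/(y²+𝗊(x)y−𝗉(x)) with its derivation D₁ (D₁x = 1, vanishing on B) is quantified
over all its realizations. -/
theorem stmt15 (g m : ℕ) (hg : 1 ≤ g)
    (L : Type) [Field L] [CharZero L]
    (φ : Polynomial (BRing g m) →+* L) (y : L) (D : L → L)
    (hinj : Function.Injective φ)
    (hy : y ^ 2 + φ (qB g m) * y = φ (pB g m))
    (hind : ∀ u v : Polynomial (BRing g m), φ v * y = φ u → v = 0)
    (hDadd : ∀ a b : L, D (a + b) = D a + D b)
    (hDmul : ∀ a b : L, D (a * b) = a * D b + D a * b)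
    (hDx : D (φ X) = 1)
    (hDc : ∀ c : BRing g m, D (φ (C c)) = 0) :
    (∃ r : ℕ → Polynomial (BQ g m),
      ∀ n : ℕ, psiB g m L φ (r n) = rtB g m L φ y D n) ∧
    (∀ (rp : Polynomial (BQ g m)) (n : ℕ), psiB g m L φ rp = rtB g m L φ y D n →
      psiB g m L φ (2 * (2 * (Polynomial.derivative rp) * fBQ g m
          + ((1 - 2*(n:ℤ) : ℤ) : Polynomial (BQ g m)) * rp
            * Polynomial.derivative (fBQ g m)))
        = rtB g m L φ y D (n+1)) :=
  stmt15_general g m L φ y D hy hind hDadd hDmul hDx hDc
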